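/- Let r > 0. Given pointed ℝ-trees (M₀,d₀,p₀), (M₁,d₁,p₁), (M₂,d₂,p₂), each of radius ≤ r, and basepoint-preserving isometric embeddings f₁ : M₀ → M₁ and f₂ : M₀ → M₂, there exist a complete pointed ℝ-tree (N,d,q) of radius ≤ r and basepoint-preserving isometric embeddings g₁ : M₁ → N and g₂ : M₂ → N such that g₁ ∘ f₁ = g₂ ∘ f₂. -/

import Mathlib

open Set Metric

/-- A geodesic segment in a metric space: the image of an isometric embedding of a
closed real interval `[0, ℓ]`, going from `a` to `b`. -/
def IsGeodesicSegmentFromTo {M : Type*} [MetricSpace M] (s : Set M) (a b : M) : Prop :=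
  ∃ ℓ : ℝ, 0 ≤ ℓ ∧ ∃ γ : ℝ → M,
    (∀ u ∈ Set.Icc (0:ℝ) ℓ, ∀ v ∈ Set.Icc (0:ℝ) ℓ, dist (γ u) (γ v) = |u - v|) ∧
    γ 0 = a ∧ γ ℓ = b ∧ s = γ '' Set.Icc 0 ℓ

/-- An arc from `a` to `b`: the (injective, continuous) image of a closed real
interval `[0, ℓ]`; a single point when `a = b`. -/
def IsArcFromTo {M : Type*} [MetricSpace M] (s : Set M) (a b : M) : Prop :=
  ∃ ℓ : ℝ, 0 ≤ ℓ ∧ ∃ γ : ℝ → M,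
    ContinuousOn γ (Set.Icc 0 ℓ) ∧ Set.InjOn γ (Set.Icc 0 ℓ) ∧
    γ 0 = a ∧ γ ℓ = b ∧ s = γ '' Set.Icc 0 ℓ

/-- An ℝ-tree: a metric space in which any two points are joined by a unique arc,
and that arc is a geodesic segment. -/
def IsRTree (M : Type*) [MetricSpace M] : Prop :=
  ∀ a b : M, ∃ s : Set M,
    IsArcFromTo s a b ∧ IsGeodesicSegmentFromTo s a b ∧
    ∀ t : Set M, IsArcFromTo t a b → t = s

/-- The geodesic segment `[a, b]` in an ℝ-tree: the unique arc from `a` to `b`. -/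
noncomputable def seg {M : Type*} [MetricSpace M] (h : IsRTree M) (a b : M) : Set M :=
  (h a b).choose

universe u

/-- A distance-preserving map (isometric embedding) between metric spaces. -/
def IsIsometric {A B : Type*} [MetricSpace A] [MetricSpace B] (f : A → B) : Prop :=
  ∀ x y : A, dist (f x) (f y) = dist x y

/-- The pointed metric space `(A, p)` has radius at most `r`. -/
def RadiusLE (A : Type*) [MetricSpace A] (p : A) (r : ℝ) : Prop :=
  ∀ x : A, dist p x ≤ r

/-- Metric completeness, as a plain predicate. -/
def IsCompleteMS (A : Type*) [MetricSpace A] : Prop :=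
  CompleteSpace A

/-!
The amalgam is the completion of the space obtained by gluing `M₁` and `M₂` along the images of
`M₀`. An ℝ-tree is the same as a complete metric space that satisfies Gromov's four point
condition and has approximate midpoints: there approximate midpoints converge, the midpoints fill
out geodesics, and every arc from `a` to `b` is the geodesic because the Gromov product `(x|b)_a`
is locally constant off it. Both properties survive completion.

In the glued space, approximate midpoints come from concatenating geodesics of `M₁` and `M₂`
through the glued copy of `M₀`. For the four point condition, take Gromov products based at a
point `p` of `M₀`: the relation `t < (x|y)_p` is transitive on each piece, and for `x ∈ M₁`,
`y ∈ M₂` it holds exactly when `t < (x|z)_p` and `t < (z|y)_p` for some `z ∈ M₀`, because `M₀`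
contains the geodesic from `p` to `z`. The radius bound holds since gluing does not change
distances from the base point.
-/

section FourPoint

variable {X : Type*} [PseudoMetricSpace X]

noncomputable def gromovProduct (p x y : X) : ℝ := (dist p x + dist p y - dist x y) / 2

theorem gromovProduct_comm (p x y : X) : gromovProduct p x y = gromovProduct p y x := by
  simp only [gromovProduct, dist_comm x y, add_comm (dist p x)]

theorem gromovProduct_nonneg (p x y : X) : 0 ≤ gromovProduct p x y := by
  unfold gromovProduct; linarith [dist_triangle_left x y p]

theorem gromovProduct_le_dist_left (p x y : X) : gromovProduct p x y ≤ dist p x := by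
  unfold gromovProduct; linarith [dist_triangle p x y]

theorem gromovProduct_le_dist_right (p x y : X) : gromovProduct p x y ≤ dist p y := by
  unfold gromovProduct; linarith [dist_triangle p y x, dist_comm x y]

theorem gromovProduct_add_gromovProduct (a b x : X) :
    gromovProduct a x b + gromovProduct b x a = dist a b := by
  unfold gromovProduct; linarith [dist_comm a b, dist_comm x a, dist_comm x b]

def FourPointCondition (X : Type*) [PseudoMetricSpace X] : Prop :=
  ∀ a b c d : X, dist a b + dist c d ≤ max (dist a c + dist b d) (dist a d + dist b c)

def GromovInequalityOn (p : X) (s : Set X) : Prop :=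
  ∀ x ∈ s, ∀ y ∈ s, ∀ z ∈ s, min (gromovProduct p x z) (gromovProduct p y z) ≤ gromovProduct p x y

theorem FourPointCondition.min_gromovProduct_le (H : FourPointCondition X) (p x y z : X) :
    min (gromovProduct p x z) (gromovProduct p y z) ≤ gromovProduct p x y := by
  rcases le_max_iff.mp (H x y p z) with h | h
  · apply min_le_of_right_le
    unfold gromovProduct
    linarith [dist_comm x p, dist_comm y p, dist_comm y z]
  · apply min_le_of_left_le
    unfold gromovProduct
    linarith [dist_comm x p, dist_comm y p, dist_comm x z]

/-- The six Gromov products of four points `x, y, z, w` at a base point are `a = (x|y)`,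
`b = (x|z)`, `c = (x|w)`, `d = (y|z)`, `e = (y|w)`, `f = (z|w)`; the four point condition for
`x, y, z, w` reads `min (b + e) (c + d) ≤ a + f`. -/
theorem min_add_le_add_of_gromov {a b c d e f : ℝ} (h₁ : min b d ≤ a) (h₂ : min c e ≤ a)
    (h₃ : min a e ≤ c) (h₄ : min a c ≤ e) (h₅ : min b c ≤ f) (h₆ : min d e ≤ f) :
    min (b + e) (c + d) ≤ a + f := by
  by_contra! hcon
  obtain ⟨hbe, hcd⟩ := lt_min_iff.mp hcon
  rcases min_le_iff.mp h₁ with hba | hda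
  · have hfe : f < e := by linarith
    have hdf : d ≤ f := by rcases min_le_iff.mp h₆ with h | h <;> linarith
    have hea : e ≤ a := by rcases min_le_iff.mp h₂ with h | h <;> linarith
    have hae : a ≤ e := by rcases min_le_iff.mp h₄ with h | h <;> linarith
    have hcf : c ≤ f := by rcases min_le_iff.mp h₅ with h | h <;> linarith
    linarith
  · have hfc : f < c := by linarith
    have hbf : b ≤ f := by rcases min_le_iff.mp h₅ with h | h <;> linarith
    have hca : c ≤ a := by rcases min_le_iff.mp h₂ with h | h <;> linarith
    have hac : a ≤ c := by rcases min_le_iff.mp h₃ with h | h <;> linarith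
    have hef : e ≤ f := by rcases min_le_iff.mp h₆ with h | h <;> linarith
    linarith

theorem fourPointCondition_of_gromovInequalityOn_univ {p : X}
    (H : GromovInequalityOn p (univ : Set X)) : FourPointCondition X := by
  have H' : ∀ x y z : X, min (gromovProduct p x z) (gromovProduct p y z) ≤ gromovProduct p x y :=
    fun x y z => H x trivial y trivial z trivial
  intro x y z w
  have key : min (gromovProduct p x z + gromovProduct p y w)
      (gromovProduct p x w + gromovProduct p y z) ≤
      gromovProduct p x y + gromovProduct p z w := by
    refine min_add_le_add_of_gromov (H' x y z) (H' x y w) ?_ ?_ ?_ ?_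
    · simpa only [gromovProduct_comm p w y] using H' x w y
    · simpa only [gromovProduct_comm p y x, gromovProduct_comm p w x] using H' y w x
    · simpa only [gromovProduct_comm p z x, gromovProduct_comm p w x] using H' z w x
    · simpa only [gromovProduct_comm p z y, gromovProduct_comm p w y] using H' z w y
  unfold gromovProduct at key
  rcases min_le_iff.mp key with h | h
  · apply le_max_of_le_left
    linarith [dist_comm y p, dist_comm z p]
  · apply le_max_of_le_right
    linarith [dist_comm y p, dist_comm z p]

end FourPoint

theorem Set.InjOn.union_of_inter_image_subset {α β : Type*} {f : α → β} {s t : Set α} {x : α}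
    (hs : InjOn f s) (ht : InjOn f t) (hxs : x ∈ s) (hxt : x ∈ t) (hst : f '' s ∩ f '' t ⊆ {f x}) :
    InjOn f (s ∪ t) := by
  have hcross : ∀ u ∈ s, ∀ v ∈ t, f u = f v → u = v := fun u hu v hv huv => by
    have hfx : f u = f x := hst ⟨mem_image_of_mem f hu, huv ▸ mem_image_of_mem f hv⟩
    exact (hs hu hxs hfx).trans (ht hxt hv (hfx.symm.trans huv))
  rintro u (hu | hu) v (hv | hv) huv
  · exact hs hu hv huv
  · exact hcross u hu v hv huv
  · exact (hcross v hv u hu huv.symm).symm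
  · exact ht hu hv huv

section Arc

variable {X : Type*} [MetricSpace X]

theorem isArcFromTo_image_Icc {γ : ℝ → X} {s t : ℝ} (hst : s ≤ t)
    (hcont : ContinuousOn γ (Icc s t)) (hinj : InjOn γ (Icc s t)) :
    IsArcFromTo (γ '' Icc s t) (γ s) (γ t) := by
  have himg : (fun u => s + u) '' Icc 0 (t - s) = Icc s t := by
    rw [image_const_add_Icc, add_zero, add_sub_cancel]
  have hmaps : MapsTo (fun u => s + u) (Icc 0 (t - s)) (Icc s t) := himg ▸ mapsTo_image _ _
  refine ⟨t - s, sub_nonneg.mpr hst, fun u => γ (s + u), hcont.comp (by fun_prop) hmaps,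
    hinj.comp (fun u _ v _ h => add_left_cancel h) hmaps, by simp, by simp, ?_⟩
  rw [← himg, image_image]

theorem IsArcFromTo.symm {s : Set X} {a b : X} (h : IsArcFromTo s a b) : IsArcFromTo s b a := by
  obtain ⟨ℓ, hℓ, γ, hcont, hinj, rfl, rfl, rfl⟩ := h
  have himg : (fun u => ℓ - u) '' Icc 0 ℓ = Icc 0 ℓ := by
    rw [image_const_sub_Icc, sub_self, sub_zero]
  have hmaps : MapsTo (fun u => ℓ - u) (Icc 0 ℓ) (Icc 0 ℓ) := fun u hu =>
    ⟨sub_nonneg.mpr hu.2, sub_le_self _ hu.1⟩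
  refine ⟨ℓ, hℓ, fun u => γ (ℓ - u), hcont.comp (by fun_prop) hmaps,
    hinj.comp (fun u _ v _ h => sub_right_injective h) hmaps, by simp, by simp, ?_⟩
  calc γ '' Icc 0 ℓ = γ '' ((fun u => ℓ - u) '' Icc 0 ℓ) := by rw [himg]
    _ = _ := image_image _ _ _

theorem IsArcFromTo.union {s t : Set X} {a m c : X} (hs : IsArcFromTo s a m)
    (ht : IsArcFromTo t m c) (hst : s ∩ t ⊆ {m}) : IsArcFromTo (s ∪ t) a c := by
  classical
  obtain ⟨ℓ₁, hℓ₁, γ₁, hcont₁, hinj₁, rfl, hm₁, rfl⟩ := hs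
  obtain ⟨ℓ₂, hℓ₂, γ₂, hcont₂, hinj₂, hm₂, rfl, rfl⟩ := ht
  set δ : ℝ → X := fun u => if u ≤ ℓ₁ then γ₁ u else γ₂ (u - ℓ₁)
  have hmaps : MapsTo (fun u => u - ℓ₁) (Icc ℓ₁ (ℓ₁ + ℓ₂)) (Icc 0 ℓ₂) := fun u hu =>
    ⟨sub_nonneg.mpr hu.1, by linarith [hu.2]⟩
  have hδ₁ : EqOn δ γ₁ (Icc 0 ℓ₁) := fun u hu => if_pos hu.2
  have hδ₂ : EqOn δ (fun u => γ₂ (u - ℓ₁)) (Icc ℓ₁ (ℓ₁ + ℓ₂)) := by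
    intro u hu
    rcases hu.1.eq_or_lt with rfl | hlt
    · simp [δ, hm₁, hm₂]
    · exact if_neg (not_le.mpr hlt)
  have himg₁ : δ '' Icc 0 ℓ₁ = γ₁ '' Icc 0 ℓ₁ := hδ₁.image_eq
  have himg₂ : δ '' Icc ℓ₁ (ℓ₁ + ℓ₂) = γ₂ '' Icc 0 ℓ₂ := by
    rw [hδ₂.image_eq, ← image_image, image_sub_const_Icc, sub_self, add_sub_cancel_left]
  have hsplit : Icc 0 ℓ₁ ∪ Icc ℓ₁ (ℓ₁ + ℓ₂) = Icc 0 (ℓ₁ + ℓ₂) :=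
    Icc_union_Icc_eq_Icc hℓ₁ (by linarith)
  have hm : δ ℓ₁ = γ₁ ℓ₁ := hδ₁ ⟨hℓ₁, le_rfl⟩
  refine ⟨ℓ₁ + ℓ₂, by positivity, δ, ?_, ?_, hδ₁ ⟨le_rfl, hℓ₁⟩, ?_, ?_⟩
  · rw [← hsplit]
    exact (hcont₁.congr hδ₁).union_of_isClosed
      ((hcont₂.comp (by fun_prop) hmaps).congr hδ₂) isClosed_Icc isClosed_Icc
  · rw [← hsplit]
    refine (hδ₁.injOn_iff.mpr hinj₁).union_of_inter_image_subset
      (hδ₂.injOn_iff.mpr (hinj₂.comp (fun u _ v _ h => sub_left_injective h) hmaps))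
      ⟨hℓ₁, le_rfl⟩ ⟨le_rfl, by linarith⟩ ?_
    rw [himg₁, himg₂, hm, hm₁]
    exact hst
  · simp [hδ₂ ⟨by linarith, le_rfl⟩]
  · rw [← hsplit, image_union, himg₁, himg₂]

end Arc

section Geodesic

variable {X : Type*} [MetricSpace X]

structure IsGeodesic (γ : ℝ → X) (a b : X) : Prop where
  dist_eq : ∀ u ∈ Icc 0 (dist a b), ∀ v ∈ Icc 0 (dist a b), dist (γ u) (γ v) = |u - v|
  apply_zero : γ 0 = a
  apply_dist : γ (dist a b) = b

namespace IsGeodesic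

variable {γ : ℝ → X} {a b : X} {t : ℝ}

theorem dist_left (hγ : IsGeodesic γ a b) (ht : t ∈ Icc 0 (dist a b)) : dist a (γ t) = t := by
  rw [← hγ.apply_zero, hγ.dist_eq 0 ⟨le_rfl, dist_nonneg⟩ t ht, zero_sub, abs_neg,
    abs_of_nonneg ht.1]

theorem dist_right (hγ : IsGeodesic γ a b) (ht : t ∈ Icc 0 (dist a b)) :
    dist (γ t) b = dist a b - t := by
  conv_lhs => rw [← hγ.apply_dist]
  rw [hγ.dist_eq t ht _ ⟨dist_nonneg, le_rfl⟩, abs_sub_comm, abs_of_nonneg (sub_nonneg.mpr ht.2)]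

theorem continuousOn (hγ : IsGeodesic γ a b) : ContinuousOn γ (Icc 0 (dist a b)) :=
  (LipschitzOnWith.of_dist_le_mul (K := 1) fun u hu v hv => by
    rw [hγ.dist_eq u hu v hv, Real.dist_eq, NNReal.coe_one, one_mul]).continuousOn

theorem injOn (hγ : IsGeodesic γ a b) : InjOn γ (Icc 0 (dist a b)) := fun u hu v hv h => by
  have := hγ.dist_eq u hu v hv
  rwa [h, dist_self, eq_comm, abs_eq_zero, sub_eq_zero] at this

theorem isArcFromTo (hγ : IsGeodesic γ a b) : IsArcFromTo (γ '' Icc 0 (dist a b)) a b :=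
  ⟨dist a b, dist_nonneg, γ, hγ.continuousOn, hγ.injOn, hγ.apply_zero, hγ.apply_dist, rfl⟩

theorem isGeodesicSegmentFromTo (hγ : IsGeodesic γ a b) :
    IsGeodesicSegmentFromTo (γ '' Icc 0 (dist a b)) a b :=
  ⟨dist a b, dist_nonneg, γ, hγ.dist_eq, hγ.apply_zero, hγ.apply_dist, rfl⟩

theorem exists_branchPoint {γ' : ℝ → X} {c : X} (hγ : IsGeodesic γ a b)
    (hγ' : IsGeodesic γ' a c) :
    ∃ t₀ ∈ Icc 0 (min (dist a b) (dist a c)), γ' t₀ = γ t₀ ∧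
      γ '' Icc t₀ (dist a b) ∩ γ' '' Icc t₀ (dist a c) ⊆ {γ t₀} := by
  set T : Set ℝ := Icc 0 (min (dist a b) (dist a c)) ∩ (fun t => (γ t, γ' t)) ⁻¹' diagonal X
  have hT : IsClosed T :=
    ((hγ.continuousOn.mono (Icc_subset_Icc le_rfl (min_le_left _ _))).prodMk
      (hγ'.continuousOn.mono (Icc_subset_Icc le_rfl (min_le_right _ _))))
      |>.preimage_isClosed_of_isClosed isClosed_Icc isClosed_diagonal
  have h0T : (0 : ℝ) ∈ T :=
    ⟨⟨le_rfl, le_min dist_nonneg dist_nonneg⟩, hγ.apply_zero.trans hγ'.apply_zero.symm⟩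
  have hTbdd : BddAbove T := ⟨_, fun t ht => ht.1.2⟩
  have ht₀ : sSup T ∈ T := hT.csSup_mem ⟨0, h0T⟩ hTbdd
  refine ⟨sSup T, ht₀.1, ht₀.2.symm, ?_⟩
  rintro _ ⟨⟨s, hs, rfl⟩, ⟨s', hs', hss'⟩⟩
  have hsb : s ∈ Icc 0 (dist a b) := ⟨ht₀.1.1.trans hs.1, hs.2⟩
  have hs'c : s' ∈ Icc 0 (dist a c) := ⟨ht₀.1.1.trans hs'.1, hs'.2⟩
  obtain rfl : s' = s := by rw [← hγ'.dist_left hs'c, hss', hγ.dist_left hsb]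
  have hsT : s' ∈ T := ⟨⟨hsb.1, le_min hs.2 hs'.2⟩, hss'.symm⟩
  rw [le_antisymm (le_csSup hTbdd hsT) hs.1]
  rfl

end IsGeodesic

namespace IsRTree

theorem exists_isGeodesic (h : IsRTree X) (a b : X) :
    ∃ γ : ℝ → X, IsGeodesic γ a b ∧ ∀ s, IsArcFromTo s a b → s = γ '' Icc 0 (dist a b) := by
  obtain ⟨s, -, ⟨ℓ, hℓ, γ, hiso, h0, hℓb, rfl⟩, huniq⟩ := h a b
  have hℓ' : ℓ = dist a b := by
    rw [← h0, ← hℓb, hiso 0 ⟨le_rfl, hℓ⟩ ℓ ⟨hℓ, le_rfl⟩, zero_sub, abs_neg, abs_of_nonneg hℓ]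
  subst hℓ'
  exact ⟨γ, ⟨hiso, h0, hℓb⟩, huniq⟩

theorem exists_median (h : IsRTree X) {γ : ℝ → X} {a b : X} (hγ : IsGeodesic γ a b) (c : X) :
    ∃ t ∈ Icc 0 (dist a b),
      dist a (γ t) + dist (γ t) c = dist a c ∧ dist b (γ t) + dist (γ t) c = dist b c := by
  obtain ⟨γ', hγ', -⟩ := exists_isGeodesic h a c
  obtain ⟨t₀, ht₀, hm, hinter⟩ := hγ.exists_branchPoint hγ'
  have ht₀b : t₀ ∈ Icc 0 (dist a b) := ⟨ht₀.1, ht₀.2.trans (min_le_left _ _)⟩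
  have ht₀c : t₀ ∈ Icc 0 (dist a c) := ⟨ht₀.1, ht₀.2.trans (min_le_right _ _)⟩
  have harc_b : IsArcFromTo (γ '' Icc t₀ (dist a b)) (γ t₀) b := by
    simpa only [hγ.apply_dist] using isArcFromTo_image_Icc ht₀b.2
      (hγ.continuousOn.mono (Icc_subset_Icc ht₀b.1 le_rfl))
      (hγ.injOn.mono (Icc_subset_Icc ht₀b.1 le_rfl))
  have harc_c : IsArcFromTo (γ' '' Icc t₀ (dist a c)) (γ t₀) c := by
    simpa only [hγ'.apply_dist, hm] using isArcFromTo_image_Icc ht₀c.2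
      (hγ'.continuousOn.mono (Icc_subset_Icc ht₀c.1 le_rfl))
      (hγ'.injOn.mono (Icc_subset_Icc ht₀c.1 le_rfl))
  obtain ⟨γ'', hγ'', huniq⟩ := exists_isGeodesic h b c
  obtain ⟨u, hu, hu'⟩ : γ t₀ ∈ γ'' '' Icc 0 (dist b c) := by
    rw [← huniq _ (IsArcFromTo.union (IsArcFromTo.symm harc_b) harc_c hinter)]
    exact Or.inl (mem_image_of_mem _ ⟨le_rfl, ht₀b.2⟩)
  refine ⟨t₀, ht₀b, ?_, ?_⟩
  · rw [← hm, hγ'.dist_left ht₀c, hγ'.dist_right ht₀c]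
    ring
  · rw [← hu', hγ''.dist_left hu, hγ''.dist_right hu]
    ring

theorem min_gromovProduct_le (h : IsRTree X) (p x y z : X) :
    min (gromovProduct p x z) (gromovProduct p y z) ≤ gromovProduct p x y := by
  obtain ⟨γ, hγ, -⟩ := exists_isGeodesic h p z
  obtain ⟨t₁, ht₁, hx₁, hx₂⟩ := exists_median h hγ x
  obtain ⟨t₂, ht₂, hy₁, hy₂⟩ := exists_median h hγ y
  have e₁ : gromovProduct p x z = t₁ := by
    unfold gromovProduct
    linarith [hγ.dist_left ht₁, hγ.dist_right ht₁, dist_comm z (γ t₁), dist_comm x z]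
  have e₂ : gromovProduct p y z = t₂ := by
    unfold gromovProduct
    linarith [hγ.dist_left ht₂, hγ.dist_right ht₂, dist_comm z (γ t₂), dist_comm y z]
  have hxy : dist x y ≤ (dist p x - t₁) + |t₁ - t₂| + (dist p y - t₂) := by
    calc dist x y ≤ dist x (γ t₁) + dist (γ t₁) (γ t₂) + dist (γ t₂) y := dist_triangle4 _ _ _ _
      _ = _ := by
        rw [hγ.dist_eq _ ht₁ _ ht₂, dist_comm x]
        linarith [hγ.dist_left ht₁, hγ.dist_left ht₂]
  rw [e₁, e₂]
  unfold gromovProduct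
  rcases abs_cases (t₁ - t₂) with ⟨habs, -⟩ | ⟨habs, -⟩
  · exact min_le_of_right_le (by linarith)
  · exact min_le_of_left_le (by linarith)

theorem fourPointCondition (h : IsRTree X) : FourPointCondition X := fun a =>
  fourPointCondition_of_gromovInequalityOn_univ (p := a)
    (fun x _ y _ z _ => min_gromovProduct_le h a x y z) a

end IsRTree

end Geodesic

section FourPointGeodesic

variable {X : Type*} [MetricSpace X]

namespace FourPointCondition

theorem dist_eq_abs_sub (H : FourPointCondition X) {a b y y' : X}
    (hy : dist a y + dist y b = dist a b) (hy' : dist a y' + dist y' b = dist a b) :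
    dist y y' = |dist a y - dist a y'| := by
  have h4 := H y y' a b
  have t1 := dist_triangle a y y'
  have t2 := dist_triangle a y' y
  have c1 := dist_comm y a
  have c2 := dist_comm y' a
  have c3 := dist_comm y' y
  rcases le_total (dist a y) (dist a y') with hc | hc
  · rw [abs_of_nonpos (by linarith), neg_sub]
    rcases le_max_iff.mp h4 with h' | h' <;> linarith
  · rw [abs_of_nonneg (by linarith)]
    rcases le_max_iff.mp h4 with h' | h' <;> linarith

theorem eq_of_between (H : FourPointCondition X) {a b y y' : X}
    (hy : dist a y + dist y b = dist a b) (hy' : dist a y' + dist y' b = dist a b)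
    (h : dist a y = dist a y') : y = y' := by
  rw [← dist_eq_zero, H.dist_eq_abs_sub hy hy', h, sub_self, abs_zero]

/-- The point between `a` and `b` at distance `(x|b)_a` from `a` is the projection of `x`. -/
theorem dist_eq_of_between (H : FourPointCondition X) {a b x m : X}
    (hm₁ : dist a m = gromovProduct a x b) (hm₂ : dist m b = dist a b - gromovProduct a x b) :
    dist x m = dist a x - gromovProduct a x b := by
  have h4 := H x m a b
  have low := dist_triangle a m x
  unfold gromovProduct at *
  rcases le_max_iff.mp h4 with h | h <;>
    linarith [dist_comm x a, dist_comm m a, dist_comm m x]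

/-- Off the points between `a` and `b`, the projection `x ↦ (x|b)_a` is locally constant. -/
theorem gromovProduct_eq_of_dist_lt (H : FourPointCondition X) {a b x y : X}
    (hxy : dist x y < dist a x - gromovProduct a x b) :
    gromovProduct a y b = gromovProduct a x b := by
  have hxy' : dist x y < dist b x - gromovProduct b x a := by
    unfold gromovProduct at hxy ⊢
    linarith [dist_comm a b, dist_comm x b, dist_comm x a]
  have ha : gromovProduct a x b ≤ gromovProduct a y b := by
    refine le_trans (le_min ?_ (gromovProduct_comm a x b).le) (H.min_gromovProduct_le a y b x)
    unfold gromovProduct at hxy ⊢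
    linarith [dist_triangle a y x, dist_comm x y]
  have hb : gromovProduct b x a ≤ gromovProduct b y a := by
    refine le_trans (le_min ?_ (gromovProduct_comm b x a).le) (H.min_gromovProduct_le b y a x)
    unfold gromovProduct at hxy' ⊢
    linarith [dist_triangle b y x, dist_comm x y]
  linarith [gromovProduct_add_gromovProduct a b x, gromovProduct_add_gromovProduct a b y]

theorem isOpen_setOf_gromovProduct_eq (H : FourPointCondition X) (a b : X) (c : ℝ) :
    IsOpen {x | gromovProduct a x b = c ∧ 0 < dist a x - gromovProduct a x b} := by
  refine Metric.isOpen_iff.mpr ?_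
  rintro x ⟨hx, hpos⟩
  refine ⟨dist a x - gromovProduct a x b, hpos, fun y hy => ?_⟩
  rw [mem_ball] at hy
  have hxy : gromovProduct a y b = gromovProduct a x b :=
    H.gromovProduct_eq_of_dist_lt (by rwa [dist_comm])
  exact ⟨hxy.trans hx, by linarith [dist_triangle a y x]⟩

theorem mem_image_of_between (H : FourPointCondition X) {a b m : X} {γ : ℝ → X} {u v : ℝ}
    (huv : u ≤ v) (hcont : ContinuousOn γ (Icc u v)) (hu : γ u = a) (hv : γ v = b)
    (hm : dist a m + dist m b = dist a b) : m ∈ γ '' Icc u v := by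
  by_contra hnot
  have hma : m ≠ a := fun h => hnot ⟨u, ⟨le_rfl, huv⟩, hu.trans h.symm⟩
  have hmb : m ≠ b := fun h => hnot ⟨v, ⟨huv, le_rfl⟩, hv.trans h.symm⟩
  set F : X → ℝ := fun x => gromovProduct a x b
  have hF : Continuous F := by unfold F gromovProduct; fun_prop
  -- Away from the segment `F` is locally constant, so if the path avoids `m` then `U` and `V`
  -- disconnect it.
  set U : Set X := {x | F x < dist a m} ∪ {x | F x = dist a m ∧ 0 < dist a x - F x}
  set V : Set X := {x | dist a m < F x}
  have hU : IsOpen U :=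
    (isOpen_lt hF continuous_const).union (H.isOpen_setOf_gromovProduct_eq a b _)
  have hV : IsOpen V := isOpen_lt continuous_const hF
  have hcover : γ '' Icc u v ⊆ U ∪ V := by
    rintro _ ⟨w, hw, rfl⟩
    rcases lt_trichotomy (F (γ w)) (dist a m) with hlt | heq | hgt
    · exact Or.inl (Or.inl hlt)
    · refine Or.inl (Or.inr ⟨heq, lt_of_le_of_ne (sub_nonneg.mpr
        (gromovProduct_le_dist_left _ _ _)) fun h0 => hnot ⟨w, hw, ?_⟩⟩)
      refine H.eq_of_between ?_ hm (by linarith)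
      simp only [F, gromovProduct] at h0 heq
      linarith
    · exact Or.inr hgt
  have hpre : IsPreconnected (γ '' Icc u v) := isPreconnected_Icc.image γ hcont
  obtain ⟨x, -, hxU, hxV⟩ := hpre U V hU hV hcover
    ⟨a, ⟨u, ⟨le_rfl, huv⟩, hu⟩, Or.inl (by simpa [F, gromovProduct] using dist_pos.mpr hma.symm)⟩
    ⟨b, ⟨v, ⟨huv, le_rfl⟩, hv⟩, by
      show dist a m < gromovProduct a b b
      unfold gromovProduct
      rw [dist_self, sub_zero]
      linarith [dist_pos.mpr hmb]⟩
  have hxV' : dist a m < F x := hxV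
  rcases hxU with h | ⟨h, -⟩
  · exact lt_asymm h hxV'
  · exact hxV'.ne' h

theorem isRTree (H : FourPointCondition X) (hgeo : ∀ a b : X, ∃ γ, IsGeodesic γ a b) :
    IsRTree X := by
  intro a b
  obtain ⟨γ, hγ⟩ := hgeo a b
  refine ⟨γ '' Icc 0 (dist a b), hγ.isArcFromTo, hγ.isGeodesicSegmentFromTo, ?_⟩
  rintro _ ⟨ℓ, hℓ, γ', hcont, hinj, h0, hℓ', rfl⟩
  apply Subset.antisymm
  · rintro _ ⟨w, hw, rfl⟩
    set x := γ' w
    set t := gromovProduct a x b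
    have ht : t ∈ Icc 0 (dist a b) :=
      ⟨gromovProduct_nonneg _ _ _, gromovProduct_le_dist_right _ _ _⟩
    have hxm := H.dist_eq_of_between (hγ.dist_left ht) (hγ.dist_right ht)
    -- the projection `γ t` of `x` lies on both pieces of the arc, before and after `x`
    obtain ⟨s₁, hs₁, hs₁m⟩ := H.mem_image_of_between hw.1 (hcont.mono (Icc_subset_Icc le_rfl hw.2))
      h0 rfl (b := x) (m := γ t) (by rw [hγ.dist_left ht, dist_comm, hxm]; ring)
    obtain ⟨s₂, hs₂, hs₂m⟩ := H.mem_image_of_between hw.2 (hcont.mono (Icc_subset_Icc hw.1 le_rfl))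
      rfl hℓ' (a := x) (m := γ t) (by
        rw [hxm, hγ.dist_right ht]; unfold t gromovProduct; linarith [dist_comm a x])
    have hs : s₁ = s₂ := hinj ⟨hs₁.1, hs₁.2.trans hw.2⟩ ⟨hw.1.trans hs₂.1, hs₂.2⟩
      (hs₁m.trans hs₂m.symm)
    have hxt : x = γ t := by rw [← hs₁m, le_antisymm hs₁.2 (hs ▸ hs₂.1)]
    exact ⟨t, ht, hxt.symm⟩
  · rintro _ ⟨s, hs, rfl⟩
    exact H.mem_image_of_between hℓ hcont h0 hℓ' (by rw [hγ.dist_left hs, hγ.dist_right hs]; ring)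

end FourPointCondition

end FourPointGeodesic

theorem Icc_subset_of_isClosed_of_midpoint_mem {S : Set ℝ} {a b : ℝ} (hS : IsClosed S)
    (ha : a ∈ S) (hb : b ∈ S) (hmid : ∀ s ∈ S, ∀ t ∈ S, (s + t) / 2 ∈ S) : Icc a b ⊆ S := by
  intro t ht
  by_contra htS
  have hbelow : BddAbove (S ∩ Icc a t) := ⟨t, fun x hx => hx.2.2⟩
  have habove : BddBelow (S ∩ Icc t b) := ⟨t, fun x hx => hx.2.1⟩
  have hu := (hS.inter isClosed_Icc).csSup_mem ⟨a, ha, le_rfl, ht.1⟩ hbelow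
  have hv := (hS.inter isClosed_Icc).csInf_mem ⟨b, hb, ht.2, le_rfl⟩ habove
  set u := sSup (S ∩ Icc a t)
  set v := sInf (S ∩ Icc t b)
  have hut : u < t := lt_of_le_of_ne hu.2.2 fun h => htS (h ▸ hu.1)
  have htv : t < v := lt_of_le_of_ne hv.2.1 fun h => htS (h ▸ hv.1)
  have hw := hmid u hu.1 v hv.1
  rcases le_total ((u + v) / 2) t with hc | hc
  · linarith [le_csSup hbelow ⟨hw, by linarith [hu.2.1], hc⟩]
  · linarith [csInf_le habove ⟨hw, hc, by linarith [hv.2.2]⟩]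

section Complete

open Filter Topology

variable {X : Type*} [MetricSpace X]

def HasApproxMidpoints (X : Type*) [PseudoMetricSpace X] : Prop :=
  ∀ a b : X, ∀ ε > 0, ∃ m, dist a m ≤ dist a b / 2 + ε ∧ dist m b ≤ dist a b / 2 + ε

def betweenDists (a b : X) : Set ℝ := {t | ∃ y, dist a y = t ∧ dist y b = dist a b - t}

namespace FourPointCondition

theorem dist_eq_abs_sub_of_dists (H : FourPointCondition X) {a b y y' : X} {s t : ℝ}
    (hy : dist a y = s ∧ dist y b = dist a b - s) (hy' : dist a y' = t ∧ dist y' b = dist a b - t) :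
    dist y y' = |s - t| := by
  rw [H.dist_eq_abs_sub (b := b) (by rw [hy.1, hy.2]; ring) (by rw [hy'.1, hy'.2]; ring),
    hy.1, hy'.1]

/-- Approximate midpoints of `a` and `b` are close to each other by the four point condition,
so they converge. -/
theorem exists_midpoint [CompleteSpace X] (H : FourPointCondition X)
    (hmid : HasApproxMidpoints X) (a b : X) :
    ∃ m, dist a m = dist a b / 2 ∧ dist m b = dist a b / 2 := by
  set ε : ℕ → ℝ := fun n => 1 / (n + 1)
  choose f hf₁ hf₂ using fun n => hmid a b (ε n) (by positivity)
  have hpair : ∀ i j, dist (f i) (f j) ≤ ε i + ε j := fun i j => by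
    rcases le_max_iff.mp (H (f i) (f j) a b) with h | h <;>
      linarith [hf₁ i, hf₂ i, hf₁ j, hf₂ j, dist_comm (f i) a, dist_comm (f j) a]
  have hε : Tendsto ε atTop (𝓝 0) := tendsto_one_div_add_atTop_nhds_zero_nat
  have hcauchy : CauchySeq f := by
    refine cauchySeq_of_le_tendsto_0 (fun N => 2 * ε N) (fun n k N hn hk => ?_)
      (by simpa using hε.const_mul 2)
    linarith [hpair n k, Nat.one_div_le_one_div (α := ℝ) hn, Nat.one_div_le_one_div (α := ℝ) hk]
  obtain ⟨m, hm⟩ := cauchySeq_tendsto_of_complete hcauchy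
  have hbound : Tendsto (fun n => dist a b / 2 + ε n) atTop (𝓝 (dist a b / 2)) := by
    simpa using tendsto_const_nhds.add hε
  have h₁ := le_of_tendsto_of_tendsto' (tendsto_const_nhds.dist hm) hbound hf₁
  have h₂ := le_of_tendsto_of_tendsto' (hm.dist tendsto_const_nhds) hbound hf₂
  have := dist_triangle a m b
  exact ⟨m, by linarith, by linarith⟩

theorem isClosed_betweenDists [CompleteSpace X] (H : FourPointCondition X) (a b : X) :
    IsClosed (betweenDists a b) := by
  refine IsSeqClosed.isClosed fun t s ht hts => ?_
  choose y hy₁ hy₂ using ht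
  have hdist : ∀ i j, dist (y i) (y j) = dist (t i) (t j) := fun i j => by
    rw [H.dist_eq_abs_sub_of_dists ⟨hy₁ i, hy₂ i⟩ ⟨hy₁ j, hy₂ j⟩, Real.dist_eq]
  have hcauchy : CauchySeq y := Metric.cauchySeq_iff.mpr fun ε hε =>
    (Metric.cauchySeq_iff.mp hts.cauchySeq ε hε).imp fun N hN i hi j hj => by
      rw [hdist]; exact hN i hi j hj
  obtain ⟨z, hz⟩ := cauchySeq_tendsto_of_complete hcauchy
  refine ⟨z, tendsto_nhds_unique (tendsto_const_nhds.dist hz) ?_,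
    tendsto_nhds_unique (hz.dist tendsto_const_nhds) ?_⟩
  · simpa only [hy₁] using hts
  · simpa only [hy₂] using tendsto_const_nhds.sub hts

theorem midpoint_mem_betweenDists [CompleteSpace X] (H : FourPointCondition X)
    (hmid : HasApproxMidpoints X) {a b : X} :
    ∀ s ∈ betweenDists a b, ∀ t ∈ betweenDists a b, (s + t) / 2 ∈ betweenDists a b := by
  intro s hs t ht
  wlog hst : s ≤ t generalizing s t
  · rw [add_comm]; exact this t ht s hs (le_of_not_ge hst)
  obtain ⟨y, hy⟩ := hs
  obtain ⟨y', hy'⟩ := ht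
  have hyy' : dist y y' = t - s := by
    rw [H.dist_eq_abs_sub_of_dists hy hy', abs_of_nonpos (by linarith), neg_sub]
  obtain ⟨m, hm₁, hm₂⟩ := H.exists_midpoint hmid y y'
  refine ⟨m, ?_, ?_⟩ <;>
    linarith [hy.1, hy.2, hy'.1, hy'.2, dist_triangle a y m, dist_triangle a m y',
      dist_triangle m y' b, dist_triangle y m b]

theorem exists_isGeodesic (H : FourPointCondition X) {a b : X}
    (hab : Icc 0 (dist a b) ⊆ betweenDists a b) : ∃ γ, IsGeodesic γ a b := by
  have : ∀ t, ∃ y, t ∈ Icc 0 (dist a b) → dist a y = t ∧ dist y b = dist a b - t := fun t => by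
    by_cases ht : t ∈ Icc 0 (dist a b)
    · obtain ⟨y, hy⟩ := hab ht
      exact ⟨y, fun _ => hy⟩
    · exact ⟨a, fun h => absurd h ht⟩
  choose γ hγ using this
  refine ⟨γ, fun u hu v hv => ?_, ?_, ?_⟩
  · exact H.dist_eq_abs_sub_of_dists (hγ u hu) (hγ v hv)
  · simpa [eq_comm] using (hγ 0 ⟨le_rfl, dist_nonneg⟩).1
  · simpa using (hγ (dist a b) ⟨dist_nonneg, le_rfl⟩).2

theorem isRTree_of_completeSpace [CompleteSpace X] (H : FourPointCondition X)
    (hmid : HasApproxMidpoints X) : IsRTree X :=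
  H.isRTree fun a b => H.exists_isGeodesic <|
    Icc_subset_of_isClosed_of_midpoint_mem (H.isClosed_betweenDists a b)
      ⟨a, dist_self a, by rw [sub_zero, dist_comm]⟩ ⟨b, rfl, by rw [dist_self, sub_self]⟩
      (H.midpoint_mem_betweenDists hmid)

end FourPointCondition

end Complete

section Amalgam

theorem amalgam_trans_of_mem_left {X : Type*} {R : X → X → Prop} (hR : ∀ x y, R x y → R y x)
    {A B C : Set X} (hcover : ∀ x, x ∈ A ∨ x ∈ B) (hCA : C ⊆ A) (hCB : C ⊆ B)
    (hA : ∀ x ∈ A, ∀ y ∈ A, ∀ z ∈ A, R x y → R y z → R x z)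
    (hB : ∀ x ∈ B, ∀ y ∈ B, ∀ z ∈ B, R x y → R y z → R x z)
    (hAB : ∀ a ∈ A, ∀ b ∈ B, R a b ↔ ∃ c ∈ C, R a c ∧ R c b)
    {x y z : X} (hx : x ∈ A) (hxy : R x y) (hyz : R y z) : R x z := by
  rcases hcover y with hy | hy <;> rcases hcover z with hz | hz
  · exact hA x hx y hy z hz hxy hyz
  · obtain ⟨c, hc, hyc, hcz⟩ := (hAB y hy z hz).mp hyz
    exact (hAB x hx z hz).mpr ⟨c, hc, hA x hx y hy c (hCA hc) hxy hyc, hcz⟩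
  · obtain ⟨c, hc, hxc, hcy⟩ := (hAB x hx y hy).mp hxy
    obtain ⟨c', hc', hzc', hc'y⟩ := (hAB z hz y hy).mp (hR y z hyz)
    have hcc' : R c c' := hB c (hCB hc) y hy c' (hCB hc') hcy (hR c' y hc'y)
    exact hA x hx c (hCA hc) z hz hxc (hA c (hCA hc) c' (hCA hc') z hz hcc' (hR z c' hzc'))
  · obtain ⟨c, hc, hxc, hcy⟩ := (hAB x hx y hy).mp hxy
    exact (hAB x hx z hz).mpr ⟨c, hc, hxc, hB c (hCB hc) y hy z hz hcy hyz⟩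

theorem amalgam_trans {X : Type*} {R : X → X → Prop} (hR : ∀ x y, R x y → R y x)
    {A B C : Set X} (hcover : ∀ x, x ∈ A ∨ x ∈ B) (hCA : C ⊆ A) (hCB : C ⊆ B)
    (hA : ∀ x ∈ A, ∀ y ∈ A, ∀ z ∈ A, R x y → R y z → R x z)
    (hB : ∀ x ∈ B, ∀ y ∈ B, ∀ z ∈ B, R x y → R y z → R x z)
    (hAB : ∀ a ∈ A, ∀ b ∈ B, R a b ↔ ∃ c ∈ C, R a c ∧ R c b) {x y z : X} :
    R x y → R y z → R x z := by
  have hBA : ∀ b ∈ B, ∀ a ∈ A, R b a ↔ ∃ c ∈ C, R b c ∧ R c a := fun b hb a ha =>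
    ⟨fun h => ((hAB a ha b hb).mp (hR b a h)).imp fun c ⟨hc, hac, hcb⟩ =>
      ⟨hc, hR c b hcb, hR a c hac⟩,
      fun ⟨c, hc, hbc, hca⟩ => hR a b ((hAB a ha b hb).mpr ⟨c, hc, hR c a hca, hR b c hbc⟩)⟩
  rcases hcover x with hx | hx
  · exact amalgam_trans_of_mem_left hR hcover hCA hCB hA hB hAB hx
  · exact amalgam_trans_of_mem_left hR (fun x => (hcover x).symm) hCB hCA hB hA hBA hx

variable {X : Type*} [PseudoMetricSpace X] {p : X} {A B C : Set X}

theorem GromovInequalityOn.lt_trans {s : Set X} (h : GromovInequalityOn p s) {x y z : X}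
    (hx : x ∈ s) (hy : y ∈ s) (hz : z ∈ s) {t : ℝ} (hxy : t < gromovProduct p x y)
    (hyz : t < gromovProduct p y z) : t < gromovProduct p x z :=
  (lt_min hxy (gromovProduct_comm p y z ▸ hyz)).trans_le (h x hx z hz y hy)

theorem lt_gromovProduct_of_starShaped (hA : GromovInequalityOn p A)
    (hB : GromovInequalityOn p B) (hCA : C ⊆ A) (hCB : C ⊆ B)
    (hC : ∀ c ∈ C, ∀ t ∈ Icc 0 (dist p c), ∃ w ∈ C, dist p w = t ∧ dist w c = dist p c - t)
    {a b c : X} (ha : a ∈ A) (hb : b ∈ B) (hc : c ∈ C) {t : ℝ}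
    (hac : t < gromovProduct p a c) (hcb : t < gromovProduct p c b) : t < gromovProduct p a b := by
  set h := min (gromovProduct p a c) (gromovProduct p c b)
  obtain ⟨w, hw, hpw, hwc⟩ := hC c hc h ⟨le_min (gromovProduct_nonneg _ _ _)
    (gromovProduct_nonneg _ _ _), (min_le_left _ _).trans (gromovProduct_le_dist_right _ _ _)⟩
  have hcw : gromovProduct p w c = h := by
    unfold gromovProduct; linarith
  have haw : h ≤ gromovProduct p a w :=
    (le_min (min_le_left _ _) hcw.ge).trans (hA a ha w (hCA hw) c (hCA hc))
  have hwb : h ≤ gromovProduct p w b :=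
    (le_min hcw.ge ((min_le_right _ _).trans (gromovProduct_comm p c b).le)).trans
      (hB w (hCB hw) b hb c (hCB hc))
  have hab : gromovProduct p a w + gromovProduct p w b - dist p w ≤ gromovProduct p a b := by
    unfold gromovProduct; linarith [dist_triangle a w b]
  linarith [lt_min hac hcb]

theorem exists_lt_gromovProduct_of_dist_lt
    (hsep : ∀ a ∈ A, ∀ b ∈ B, ∀ s, dist a b < s → ∃ c ∈ C, dist a c + dist c b < s)
    {a b : X} (ha : a ∈ A) (hb : b ∈ B) {t : ℝ} (h : t < gromovProduct p a b) :
    ∃ c ∈ C, t < gromovProduct p a c ∧ t < gromovProduct p c b := by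
  obtain ⟨c, hc, hacb⟩ := hsep a ha b hb (dist p a + dist p b - 2 * t) (by
    unfold gromovProduct at h; linarith)
  refine ⟨c, hc, ?_, ?_⟩ <;>
  · have := gromovProduct_le_dist_right p a c
    have := gromovProduct_le_dist_left p c b
    unfold gromovProduct at *
    linarith

theorem gromovInequalityOn_univ_of_amalgam (hcover : ∀ x, x ∈ A ∨ x ∈ B) (hCA : C ⊆ A)
    (hCB : C ⊆ B) (hA : GromovInequalityOn p A) (hB : GromovInequalityOn p B)
    (hC : ∀ c ∈ C, ∀ t ∈ Icc 0 (dist p c), ∃ w ∈ C, dist p w = t ∧ dist w c = dist p c - t)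
    (hsep : ∀ a ∈ A, ∀ b ∈ B, ∀ s, dist a b < s → ∃ c ∈ C, dist a c + dist c b < s) :
    GromovInequalityOn p (univ : Set X) := by
  -- The Gromov inequality at `p` says that each relation `t < (x|y)_p` is transitive.
  have key : ∀ t : ℝ, ∀ x y z : X,
      t < gromovProduct p x y → t < gromovProduct p y z → t < gromovProduct p x z := by
    intro t x y z
    refine amalgam_trans (fun x y h => (gromovProduct_comm p x y).symm ▸ h) hcover hCA hCB
      (fun x hx y hy z hz => hA.lt_trans hx hy hz) (fun x hx y hy z hz => hB.lt_trans hx hy hz)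
      fun a ha b hb => ⟨exists_lt_gromovProduct_of_dist_lt hsep ha hb, ?_⟩
    rintro ⟨c, hc, hac, hcb⟩
    exact lt_gromovProduct_of_starShaped hA hB hCA hCB hC ha hb hc hac hcb
  intro x _ y _ z _
  by_contra! h
  obtain ⟨hxz, hyz⟩ := lt_min_iff.mp h
  exact lt_irrefl _ (key _ x z y hxz ((gromovProduct_comm p y z).symm ▸ hyz))

end Amalgam

section Midpoints

variable {X : Type*} [MetricSpace X]

theorem exists_approxMidpoint_of_broken {a b c : X} (hac : Icc 0 (dist a c) ⊆ betweenDists a c)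
    (hcb : Icc 0 (dist c b) ⊆ betweenDists c b) :
    ∃ m, dist a m ≤ (dist a c + dist c b) / 2 ∧ dist m b ≤ (dist a c + dist c b) / 2 := by
  rcases le_total ((dist a c + dist c b) / 2) (dist a c) with h | h
  · obtain ⟨m, hm₁, hm₂⟩ := hac ⟨by positivity, h⟩
    exact ⟨m, hm₁.le, by linarith [dist_triangle m c b]⟩
  · have ht : (dist a c + dist c b) / 2 - dist a c ∈ Icc 0 (dist c b) :=
      ⟨by linarith, by linarith [dist_nonneg (x := a) (y := c)]⟩
    obtain ⟨m, hm₁, hm₂⟩ := hcb ht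
    exact ⟨m, by linarith [dist_triangle a c m], by linarith⟩

theorem IsRTree.Icc_subset_betweenDists_image {Y : Type*} [MetricSpace Y] (h : IsRTree Y)
    {g : Y → X} (hg : Isometry g) (a b : Y) :
    Icc 0 (dist (g a) (g b)) ⊆ betweenDists (g a) (g b) := by
  obtain ⟨γ, hγ, -⟩ := IsRTree.exists_isGeodesic h a b
  intro t ht
  rw [hg.dist_eq] at ht
  refine ⟨g (γ t), ?_, ?_⟩
  · rw [hg.dist_eq, hγ.dist_left ht]
  · rw [hg.dist_eq, hg.dist_eq, hγ.dist_right ht]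

theorem IsRTree.exists_midpoint_image {Y : Type*} [MetricSpace Y] (h : IsRTree Y)
    {g : Y → X} (hg : Isometry g) (a b : Y) :
    ∃ m, dist (g a) m = dist (g a) (g b) / 2 ∧ dist m (g b) = dist (g a) (g b) / 2 := by
  have ht : dist (g a) (g b) / 2 ∈ Icc 0 (dist (g a) (g b)) :=
    ⟨by positivity, half_le_self dist_nonneg⟩
  obtain ⟨m, hm₁, hm₂⟩ := IsRTree.Icc_subset_betweenDists_image h hg a b ht
  exact ⟨m, hm₁, by linarith⟩

end Midpoints

section Glue

variable {M₀ M₁ M₂ : Type*} [MetricSpace M₀] [Nonempty M₀] [MetricSpace M₁] [MetricSpace M₂]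
  {f₁ : M₀ → M₁} {f₂ : M₀ → M₂} (hf₁ : Isometry f₁) (hf₂ : Isometry f₂)

theorem Isometry.gromovProduct_eq {X Y : Type*} [PseudoMetricSpace X] [PseudoMetricSpace Y]
    {g : Y → X} (hg : Isometry g) (p x y : Y) :
    gromovProduct (g p) (g x) (g y) = gromovProduct p x y := by
  simp only [gromovProduct, hg.dist_eq]

theorem Isometry.gromovInequalityOn_range {X Y : Type*} [PseudoMetricSpace X]
    [PseudoMetricSpace Y] {g : Y → X} (hg : Isometry g) {p : Y} (H : FourPointCondition Y) :
    GromovInequalityOn (g p) (range g) := by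
  rintro _ ⟨x, rfl⟩ _ ⟨y, rfl⟩ _ ⟨z, rfl⟩
  simpa only [hg.gromovProduct_eq] using H.min_gromovProduct_le p x y z

theorem glueSpace_cover (u : GlueSpace hf₁ hf₂) :
    u ∈ range (toGlueL hf₁ hf₂) ∨ u ∈ range (toGlueR hf₁ hf₂) := by
  induction u using Quotient.inductionOn' with
  | h u => rcases u with x | y
           · exact .inl ⟨x, rfl⟩
           · exact .inr ⟨y, rfl⟩

theorem toGlueL_comp_eq (z : M₀) : toGlueL hf₁ hf₂ (f₁ z) = toGlueR hf₁ hf₂ (f₂ z) :=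
  congrFun (toGlue_commute hf₁ hf₂) z

theorem exists_dist_add_dist_lt_glueSpace (x : M₁) (y : M₂) {s : ℝ}
    (hs : dist (toGlueL hf₁ hf₂ x) (toGlueR hf₁ hf₂ y) < s) :
    ∃ z, dist (toGlueL hf₁ hf₂ x) (toGlueL hf₁ hf₂ (f₁ z)) +
      dist (toGlueL hf₁ hf₂ (f₁ z)) (toGlueR hf₁ hf₂ y) < s := by
  have hinf : dist (toGlueL hf₁ hf₂ x) (toGlueR hf₁ hf₂ y) = ⨅ z, dist x (f₁ z) + dist y (f₂ z) :=
    add_zero _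
  obtain ⟨z, hz⟩ := exists_lt_of_ciInf_lt (hinf ▸ hs)
  refine ⟨z, ?_⟩
  rwa [(toGlueL_isometry hf₁ hf₂).dist_eq, toGlueL_comp_eq, (toGlueR_isometry hf₁ hf₂).dist_eq,
    dist_comm (f₂ z)]

theorem fourPointCondition_glueSpace (h₀ : IsRTree M₀) (H₁ : FourPointCondition M₁)
    (H₂ : FourPointCondition M₂) : FourPointCondition (GlueSpace hf₁ hf₂) := by
  have hL := toGlueL_isometry hf₁ hf₂
  have hR := toGlueR_isometry hf₁ hf₂
  obtain ⟨p₀⟩ := ‹Nonempty M₀›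
  have hC : range (toGlueL hf₁ hf₂ ∘ f₁) ⊆ range (toGlueR hf₁ hf₂) := by
    rintro _ ⟨z, rfl⟩
    exact ⟨f₂ z, (toGlueL_comp_eq hf₁ hf₂ z).symm⟩
  refine fourPointCondition_of_gromovInequalityOn_univ
    (gromovInequalityOn_univ_of_amalgam (p := toGlueL hf₁ hf₂ (f₁ p₀)) (glueSpace_cover hf₁ hf₂)
      (range_comp_subset_range _ _) hC (hL.gromovInequalityOn_range H₁) ?_ ?_ ?_)
  · rw [toGlueL_comp_eq]
    exact hR.gromovInequalityOn_range H₂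
  · rintro _ ⟨z, rfl⟩ t ht
    obtain ⟨γ, hγ, -⟩ := IsRTree.exists_isGeodesic h₀ p₀ z
    simp only [Function.comp, hL.dist_eq, hf₁.dist_eq] at ht ⊢
    exact ⟨toGlueL hf₁ hf₂ (f₁ (γ t)), ⟨γ t, rfl⟩,
      by rw [hL.dist_eq, hf₁.dist_eq, hγ.dist_left ht],
      by rw [hL.dist_eq, hf₁.dist_eq, hγ.dist_right ht]⟩
  · rintro _ ⟨x, rfl⟩ _ ⟨y, rfl⟩ s hs
    obtain ⟨z, hz⟩ := exists_dist_add_dist_lt_glueSpace hf₁ hf₂ x y hs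
    exact ⟨_, mem_range_self z, hz⟩

theorem hasApproxMidpoints_glueSpace (h₁ : IsRTree M₁) (h₂ : IsRTree M₂) :
    HasApproxMidpoints (GlueSpace hf₁ hf₂) := by
  have hL := toGlueL_isometry hf₁ hf₂
  have hR := toGlueR_isometry hf₁ hf₂
  have cross : ∀ x y, ∀ ε > 0, ∃ m,
      dist (toGlueL hf₁ hf₂ x) m ≤ dist (toGlueL hf₁ hf₂ x) (toGlueR hf₁ hf₂ y) / 2 + ε ∧
      dist m (toGlueR hf₁ hf₂ y) ≤ dist (toGlueL hf₁ hf₂ x) (toGlueR hf₁ hf₂ y) / 2 + ε := by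
    intro x y ε hε
    obtain ⟨z, hz⟩ := exists_dist_add_dist_lt_glueSpace hf₁ hf₂ x y
      (lt_add_of_pos_right _ (by positivity : 0 < 2 * ε))
    have hsplit := IsRTree.Icc_subset_betweenDists_image h₂ hR (f₂ z) y
    rw [← toGlueL_comp_eq] at hsplit
    obtain ⟨m, hm₁, hm₂⟩ := exists_approxMidpoint_of_broken
      (IsRTree.Icc_subset_betweenDists_image h₁ hL x (f₁ z)) hsplit
    exact ⟨m, by linarith, by linarith⟩
  intro u v ε hε
  rcases glueSpace_cover hf₁ hf₂ u with ⟨x, rfl⟩ | ⟨x, rfl⟩ <;>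
    rcases glueSpace_cover hf₁ hf₂ v with ⟨y, rfl⟩ | ⟨y, rfl⟩
  · obtain ⟨m, hm₁, hm₂⟩ := IsRTree.exists_midpoint_image h₁ hL x y
    exact ⟨m, by linarith, by linarith⟩
  · exact cross x y ε hε
  · obtain ⟨m, hm₁, hm₂⟩ := cross y x ε hε
    exact ⟨m, by rw [dist_comm, dist_comm (toGlueR hf₁ hf₂ x)]; exact hm₂,
      by rw [dist_comm, dist_comm (toGlueR hf₁ hf₂ x)]; exact hm₁⟩
  · obtain ⟨m, hm₁, hm₂⟩ := IsRTree.exists_midpoint_image h₂ hR x y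
    exact ⟨m, by linarith, by linarith⟩

end Glue

section DenseRange

variable {X Y : Type*} [PseudoMetricSpace X] [PseudoMetricSpace Y] {f : X → Y}

theorem FourPointCondition.of_denseRange (H : FourPointCondition X) (hf : Isometry f)
    (hd : DenseRange f) : FourPointCondition Y := by
  have key : ∀ q : Y × Y × Y × Y, dist q.1 q.2.1 + dist q.2.2.1 q.2.2.2 ≤
      max (dist q.1 q.2.2.1 + dist q.2.1 q.2.2.2) (dist q.1 q.2.2.2 + dist q.2.1 q.2.2.1) := by
    refine isClosed_property (hd.prodMap (hd.prodMap (hd.prodMap hd)))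
      (isClosed_le (by fun_prop) (by fun_prop)) ?_
    rintro ⟨a, b, c, d⟩
    simpa only [Prod.map, hf.dist_eq] using H a b c d
  exact fun a b c d => key (a, b, c, d)

theorem HasApproxMidpoints.of_denseRange (H : HasApproxMidpoints X) (hf : Isometry f)
    (hd : DenseRange f) : HasApproxMidpoints Y := by
  intro a b ε hε
  obtain ⟨a', ha'⟩ := Metric.denseRange_iff.mp hd a (ε / 4) (by positivity)
  obtain ⟨b', hb'⟩ := Metric.denseRange_iff.mp hd b (ε / 4) (by positivity)
  obtain ⟨m, hm₁, hm₂⟩ := H a' b' (ε / 4) (by positivity)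
  have := dist_triangle4 (f a') a b (f b')
  have := hf.dist_eq a' b'
  refine ⟨f m, ?_, ?_⟩
  · linarith [hf.dist_eq a' m, dist_triangle a (f a') (f m), dist_comm a (f a'),
      dist_comm b (f b')]
  · linarith [hf.dist_eq m b', dist_triangle (f m) (f b') b, dist_comm a (f a'),
      dist_comm b (f b')]

end DenseRange

theorem statement_7_general {M₀ M₁ M₂ : Type u}
    [MetricSpace M₀] [MetricSpace M₁] [MetricSpace M₂]
    (r : ℝ)
    (h₀ : IsRTree M₀) (h₁ : IsRTree M₁) (h₂ : IsRTree M₂)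
    (p₀ : M₀) (p₁ : M₁) (p₂ : M₂)
    (hrad₁ : RadiusLE M₁ p₁ r) (hrad₂ : RadiusLE M₂ p₂ r)
    (f₁ : M₀ → M₁) (f₂ : M₀ → M₂)
    (hf₁ : IsIsometric f₁) (hf₂ : IsIsometric f₂)
    (hb₁ : f₁ p₀ = p₁) (hb₂ : f₂ p₀ = p₂) :
    ∃ (N : Type u) (mN : MetricSpace N) (q : N) (g₁ : M₁ → N) (g₂ : M₂ → N),
      @IsRTree N mN ∧ @IsCompleteMS N mN ∧ @RadiusLE N mN q r ∧
      @IsIsometric M₁ N _ mN g₁ ∧ @IsIsometric M₂ N _ mN g₂ ∧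
      g₁ p₁ = q ∧ g₂ p₂ = q ∧ g₁ ∘ f₁ = g₂ ∘ f₂ := by
  have hi₁ : Isometry f₁ := Isometry.of_dist_eq hf₁
  have hi₂ : Isometry f₂ := Isometry.of_dist_eq hf₂
  have : Nonempty M₀ := ⟨p₀⟩
  set L := toGlueL hi₁ hi₂
  set R := toGlueR hi₁ hi₂
  set ι : GlueSpace hi₁ hi₂ → UniformSpace.Completion (GlueSpace hi₁ hi₂) := (↑)
  have hι := UniformSpace.Completion.coe_isometry (α := GlueSpace hi₁ hi₂)
  have hιd := UniformSpace.Completion.denseRange_coe (α := GlueSpace hi₁ hi₂)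
  have hbase : L p₁ = R p₂ := by rw [← hb₁, ← hb₂]; exact toGlueL_comp_eq hi₁ hi₂ p₀
  have hrad : ∀ u : GlueSpace hi₁ hi₂, dist (L p₁) u ≤ r := by
    intro u
    rcases glueSpace_cover hi₁ hi₂ u with ⟨x, rfl⟩ | ⟨y, rfl⟩
    · rw [(toGlueL_isometry hi₁ hi₂).dist_eq]; exact hrad₁ x
    · rw [hbase, (toGlueR_isometry hi₁ hi₂).dist_eq]; exact hrad₂ y
  refine ⟨_, inferInstance, ι (L p₁), ι ∘ L, ι ∘ R, ?_, inferInstanceAs (CompleteSpace _), ?_,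
    (hι.comp (toGlueL_isometry hi₁ hi₂)).dist_eq, (hι.comp (toGlueR_isometry hi₁ hi₂)).dist_eq,
    rfl, by simp [hbase], by rw [Function.comp_assoc, Function.comp_assoc, toGlue_commute]⟩
  · exact ((fourPointCondition_glueSpace hi₁ hi₂ h₀ (IsRTree.fourPointCondition h₁)
      (IsRTree.fourPointCondition h₂)).of_denseRange hι hιd).isRTree_of_completeSpace
      ((hasApproxMidpoints_glueSpace hi₁ hi₂ h₁ h₂).of_denseRange hι hιd)
  · intro x
    induction x using UniformSpace.Completion.induction_on with
    | hp => exact isClosed_le (by fun_prop) continuous_const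
    | ih u => rw [hι.dist_eq]; exact hrad u

/-- Pointed ℝ-trees of radius ≤ r can be amalgamated over a common
pointed subtree, within complete pointed ℝ-trees of radius ≤ r, by basepoint-preserving
isometric embeddings. -/
theorem statement_7 {M₀ M₁ M₂ : Type u}
    [MetricSpace M₀] [MetricSpace M₁] [MetricSpace M₂]
    (r : ℝ) (hr : 0 < r)
    (h₀ : IsRTree M₀) (h₁ : IsRTree M₁) (h₂ : IsRTree M₂)
    (p₀ : M₀) (p₁ : M₁) (p₂ : M₂)
    (hrad₀ : RadiusLE M₀ p₀ r) (hrad₁ : RadiusLE M₁ p₁ r) (hrad₂ : RadiusLE M₂ p₂ r)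
    (f₁ : M₀ → M₁) (f₂ : M₀ → M₂)
    (hf₁ : IsIsometric f₁) (hf₂ : IsIsometric f₂)
    (hb₁ : f₁ p₀ = p₁) (hb₂ : f₂ p₀ = p₂) :
    ∃ (N : Type u) (mN : MetricSpace N) (q : N) (g₁ : M₁ → N) (g₂ : M₂ → N),
      @IsRTree N mN ∧ @IsCompleteMS N mN ∧ @RadiusLE N mN q r ∧
      @IsIsometric M₁ N _ mN g₁ ∧ @IsIsometric M₂ N _ mN g₂ ∧
      g₁ p₁ = q ∧ g₂ p₂ = q ∧ g₁ ∘ f₁ = g₂ ∘ f₂ :=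
  statement_7_general r h₀ h₁ h₂ p₀ p₁ p₂ hrad₁ hrad₂ f₁ f₂ hf₁ hf₂ hb₁ hb₂
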